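/- Every uncountable Gδ subset H of Cantor space 2^ℕ contains a subset homeomorphic to 2^ℕ. -/

import Mathlib

/-!
A Gδ set `⋂ Uₙ` in a Polish space becomes clopen for some finer Polish topology: each closed
set `Uₙᶜ` is clopenable, and clopenable sets are closed under countable unions and complements.
In that finer topology the set is closed and uncountable, so it receives a continuous injection
of Cantor space, which stays continuous for the original topology. A continuous injection from
the compact space `ℕ → Bool` into a Hausdorff space is a homeomorphism onto its range.
-/

open Set PolishSpace

theorem IsGδ.isClopenable {α : Type*} [TopologicalSpace α] [PolishSpace α] {s : Set α}
    (hs : IsGδ s) : IsClopenable s := by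
  obtain ⟨U, hU, rfl⟩ := hs.eq_iInter_nat
  have hcompl : IsClopenable (⋃ n, (U n)ᶜ) :=
    IsClopenable.iUnion fun n ↦ (hU n).isClosed_compl.isClopenable
  simpa only [compl_iUnion, compl_compl] using hcompl.compl

theorem PolishSpace.IsClopenable.exists_nat_bool_injection_of_not_countable {α : Type*}
    [TopologicalSpace α] {C : Set α} (hC : IsClopenable C) (hunc : ¬C.Countable) :
    ∃ f : (ℕ → Bool) → α, range f ⊆ C ∧ Continuous f ∧ Function.Injective f := by
  obtain ⟨t', ht', ht'_polish, hC_closed, -⟩ := hC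
  obtain ⟨f, hfC, hf, hinj⟩ :=
    @IsClosed.exists_nat_bool_injection_of_not_countable α t' ht'_polish C hC_closed hunc
  exact ⟨f, hfC, continuous_le_rng ht' hf, hinj⟩

theorem IsGδ.exists_subset_homeomorph_nat_bool_of_not_countable {α : Type*}
    [TopologicalSpace α] [PolishSpace α] {H : Set α} (hH : IsGδ H) (hunc : ¬H.Countable) :
    ∃ P ⊆ H, Nonempty (P ≃ₜ (ℕ → Bool)) := by
  obtain ⟨f, hfH, hf, hinj⟩ := hH.isClopenable.exists_nat_bool_injection_of_not_countable hunc
  exact ⟨range f, hfH, ⟨(hf.isClosedEmbedding hinj).isEmbedding.toHomeomorph.symm⟩⟩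

/-- Every uncountable Gδ subset of Cantor space `2^ℕ` contains a subset
homeomorphic to `2^ℕ`. -/
theorem uncountable_gdelta_contains_perfect (H : Set (ℕ → Bool))
    (hH : IsGδ H) (hunc : ¬ H.Countable) :
    ∃ P : Set (ℕ → Bool), P ⊆ H ∧ Nonempty (↥P ≃ₜ (ℕ → Bool)) := by
  -- instance search does not find this on its own
  have : PolishSpace (ℕ → Bool) := {}
  exact hH.exists_subset_homeomorph_nat_bool_of_not_countable hunc
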